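/- Let a > 0. Then lim_{m→1⁺} α(a,m) = 1, where α(a,m) is the unique value with inf_ξ μ₁(a,m,α(a,m);ξ) = 0. Quantitatively: if m = 1 + ε with ε ∈ (0,1) and α = α(a,m), then 0 ≥ 1 - α + m·ε·(Θ₀ - α), from which 1 - α ≤ m·ε·(α - Θ₀) ≤ 2ε. -/

import Mathlib

open MeasureTheory Set Filter Topology

noncomputable section

/-- `B¹(ℝ₊)`-type regularity on the half line (smooth core):
`u`, `u'` and `t·u` are square integrable on `(0,∞)`. -/
def MemB1p (u : ℝ → ℝ) : Prop :=
  Differentiable ℝ u ∧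
  IntegrableOn (fun t => (u t)^2) (Ioi 0) ∧
  IntegrableOn (fun t => (deriv u t)^2) (Ioi 0) ∧
  IntegrableOn (fun t => t^2 * (u t)^2) (Ioi 0)

/-- The Robin quadratic form `q[γ,ξ]` of `-d²/dt² + (t-ξ)²` on `ℝ₊`. -/
def qRobin (γ ξ : ℝ) (u : ℝ → ℝ) : ℝ :=
  (∫ t in Ioi (0:ℝ), ((deriv u t)^2 + (t - ξ)^2 * (u t)^2)) + γ * (u 0)^2

/-- squared `L²(ℝ₊)` norm. -/
def np (u : ℝ → ℝ) : ℝ := ∫ t in Ioi (0:ℝ), (u t)^2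

/-- Lowest Robin eigenvalue `λ₁(γ,ξ)`, defined variationally. -/
def lambda1 (γ ξ : ℝ) : ℝ :=
  sInf {r : ℝ | ∃ u : ℝ → ℝ, MemB1p u ∧ np u ≠ 0 ∧ r = qRobin γ ξ u / np u}

/-- Lowest Neumann eigenvalue `λ₁^N(ξ)` (Robin with `γ = 0`). -/
def lambda1N (ξ : ℝ) : ℝ := lambda1 0 ξ

/-- Lowest Dirichlet eigenvalue `λ₁^D(ξ)`, defined variationally. -/
def lambda1D (ξ : ℝ) : ℝ :=
  sInf {r : ℝ | ∃ u : ℝ → ℝ, MemB1p u ∧ u 0 = 0 ∧ np u ≠ 0 ∧ r = qRobin 0 ξ u / np u}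

/-- The de Gennes constant `Θ₀ = inf_ξ λ₁^N(ξ)`. -/
def Theta0 : ℝ := sInf (Set.range lambda1N)

/-- `B¹(ℝ)`-type regularity on the whole line (smooth core). -/
def MemB1 (u : ℝ → ℝ) : Prop :=
  Differentiable ℝ u ∧
  Integrable (fun t => (u t)^2) ∧
  Integrable (fun t => (deriv u t)^2) ∧
  Integrable (fun t => t^2 * (u t)^2)

/-- The interface quadratic form `Q[a,m,α;ξ]` on `B¹(ℝ)`. -/
def QI (a m α ξ : ℝ) (u : ℝ → ℝ) : ℝ :=
  (∫ t in Ioi (0:ℝ), ((deriv u t)^2 + (t - ξ)^2 * (u t)^2 - α * (u t)^2)) +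
  ∫ t in Iio (0:ℝ), ((1/m) * ((deriv u t)^2 + (t - ξ)^2 * (u t)^2) + a * α * (u t)^2)

/-- squared `L²(ℝ)` norm. -/
def nR (u : ℝ → ℝ) : ℝ := ∫ t, (u t)^2

/-- Ground state energy `μ₁(a,m,α;ξ)` of the interface operator, defined variationally. -/
def mu1 (a m α ξ : ℝ) : ℝ :=
  sInf {r : ℝ | ∃ u : ℝ → ℝ, MemB1 u ∧ nR u ≠ 0 ∧ r = QI a m α ξ u / nR u}

/-- The critical value `α(a,m)` (the unique `α > 0` with `inf_ξ μ₁(a,m,α;ξ) = 0`). -/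
def alphaF (a m : ℝ) : ℝ :=
  sInf {α : ℝ | 0 < α ∧ sInf (Set.range (mu1 a m α)) = 0}

/-!
Write `E₋, E₊` for the energies `∫ u'² + (t - ξ)² u²` and `N₋, N₊` for the masses `∫ u²` of `u`
on the two half lines. As `(t - ξ) u²` and its derivative are integrable, `∫ ((t - ξ) u²)' = 0`,
that is `∫ (u' + (t - ξ) u)² = E₋ + E₊ - N₋ - N₊`, so `N₋ + N₊ ≤ E₋ + E₊` with equality for
the Gaussian centred at `ξ`, while the Neumann problem on `ℝ₊` gives `Θ₀ N₊ ≤ E₊`. As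
`(1 + mε)/m ≥ 1`, these yield `(1 + mε) μ₁ ≥ 1 - α + mε(Θ₀ - α)` once `Θ₀ ≤ α`, which holds at a
critical `α` since otherwise `μ₁ ≥ min (Θ₀ - α) (aα) > 0`. Gaussians centred at `ξ → ∞` give
`inf_ξ μ₁ ≤ 1 - α`, so critical values are at most `1`. The map `α ↦ inf_ξ μ₁` is
`(1 + a)`-Lipschitz, positive at `0` and nonpositive at `1`, so a critical value exists and
`1 - 2ε ≤ α(a, 1 + ε) ≤ 1`.
-/

namespace MemB1

variable {u : ℝ → ℝ}

lemma memLp_two (hu : MemB1 u) : MemLp u 2 :=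
  (memLp_two_iff_integrable_sq hu.1.continuous.aestronglyMeasurable).2 hu.2.1

lemma memLp_two_deriv (hu : MemB1 u) : MemLp (deriv u) 2 :=
  (memLp_two_iff_integrable_sq (measurable_deriv u).aestronglyMeasurable).2 hu.2.2.1

lemma memLp_two_sub_mul (hu : MemB1 u) (ξ : ℝ) : MemLp (fun t => (t - ξ) * u t) 2 := by
  have hc : Continuous fun t => t * u t := continuous_id.mul hu.1.continuous
  have h : MemLp (fun t => t * u t) 2 :=
    (memLp_two_iff_integrable_sq hc.aestronglyMeasurable).2 (by simpa only [mul_pow] using hu.2.2.2)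
  convert h.sub (hu.memLp_two.const_mul ξ) using 1
  ext t
  simp only [Pi.sub_apply]
  ring

lemma of_memLp_two {ξ : ℝ} (hd : Differentiable ℝ u) (hu : MemLp u 2)
    (hu' : MemLp (deriv u) 2) (hξ : MemLp (fun t => (t - ξ) * u t) 2) : MemB1 u := by
  have h : MemLp (fun t => t * u t) 2 := by
    convert hξ.add (hu.const_mul ξ) using 1
    ext t
    simp only [Pi.add_apply]
    ring
  exact ⟨hd, hu.integrable_sq, hu'.integrable_sq, by simpa only [mul_pow] using h.integrable_sq⟩

lemma integrable_energy (hu : MemB1 u) (ξ : ℝ) :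
    Integrable (fun t => deriv u t ^ 2 + (t - ξ) ^ 2 * u t ^ 2) := by
  simpa only [Pi.add_def, mul_pow] using hu.memLp_two_deriv.integrable_sq.add
    (hu.memLp_two_sub_mul ξ).integrable_sq

theorem integral_energy_eq (hu : MemB1 u) (ξ : ℝ) :
    ∫ t, (deriv u t ^ 2 + (t - ξ) ^ 2 * u t ^ 2) =
      (∫ t, u t ^ 2) + ∫ t, (deriv u t + (t - ξ) * u t) ^ 2 := by
  have hcross : Integrable (fun t => 2 * ((t - ξ) * u t * deriv u t)) :=
    ((hu.memLp_two_sub_mul ξ).integrable_mul hu.memLp_two_deriv).const_mul 2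
  have hzero : ∫ t, (u t ^ 2 + 2 * ((t - ξ) * u t * deriv u t)) = 0 := by
    refine integral_eq_zero_of_hasDerivAt_of_integrable (f := fun t => (t - ξ) * u t ^ 2)
      (fun t => ?_) (hu.2.1.add hcross) ?_
    · exact (((hasDerivAt_id' t).sub_const ξ).mul ((hu.1 t).hasDerivAt.pow 2)).congr_deriv
        (by simp only [Pi.pow_apply]; ring)
    · simpa only [Pi.mul_def, sq, ← mul_assoc] using
        (hu.memLp_two_sub_mul ξ).integrable_mul hu.memLp_two
  have hsq : ∫ t, (deriv u t + (t - ξ) * u t) ^ 2 =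
      (∫ t, (deriv u t ^ 2 + (t - ξ) ^ 2 * u t ^ 2)) + ∫ t, 2 * ((t - ξ) * u t * deriv u t) := by
    rw [← integral_add (hu.integrable_energy ξ) hcross]
    congr 1 with t
    ring
  rw [integral_add hu.2.1 hcross] at hzero
  linarith

theorem integral_sq_le_integral_energy (hu : MemB1 u) (ξ : ℝ) :
    ∫ t, u t ^ 2 ≤ ∫ t, (deriv u t ^ 2 + (t - ξ) ^ 2 * u t ^ 2) := by
  rw [hu.integral_energy_eq ξ]
  exact le_add_of_nonneg_right (integral_nonneg fun t => sq_nonneg _)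

end MemB1

section Gaussian

open Real

def gaussian (ξ t : ℝ) : ℝ := exp (-(t - ξ) ^ 2 / 2)

lemma integrable_exp_neg_sq : Integrable fun t : ℝ => exp (-t ^ 2) := by
  simpa using integrable_exp_neg_mul_sq one_pos

lemma integral_exp_neg_sq : ∫ t : ℝ, exp (-t ^ 2) = √π := by
  simpa using integral_gaussian 1

variable (ξ : ℝ)

lemma gaussian_sq (t : ℝ) : gaussian ξ t ^ 2 = exp (-(t - ξ) ^ 2) := by
  rw [gaussian, sq, ← exp_add]
  ring_nf

lemma hasDerivAt_gaussian (t : ℝ) : HasDerivAt (gaussian ξ) (-(t - ξ) * gaussian ξ t) t := by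
  have h : HasDerivAt (fun s => -(s - ξ) ^ 2 / 2) (-(2 * (t - ξ)) / 2) t := by
    simpa using (((hasDerivAt_id' t).sub_const ξ).pow 2).neg.div_const 2
  exact h.exp.congr_deriv (by rw [gaussian]; ring)

lemma differentiable_gaussian : Differentiable ℝ (gaussian ξ) :=
  fun t => (hasDerivAt_gaussian ξ t).differentiableAt

lemma deriv_gaussian : deriv (gaussian ξ) = fun t => -(t - ξ) * gaussian ξ t :=
  funext fun t => (hasDerivAt_gaussian ξ t).deriv

lemma memLp_two_gaussian : MemLp (gaussian ξ) 2 :=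
  (memLp_two_iff_integrable_sq (differentiable_gaussian ξ).continuous.aestronglyMeasurable).2
    (by simpa only [gaussian_sq] using integrable_exp_neg_sq.comp_sub_right ξ)

lemma memLp_two_sub_mul_gaussian : MemLp (fun t => (t - ξ) * gaussian ξ t) 2 := by
  have hc : Continuous fun t => (t - ξ) * gaussian ξ t :=
    (continuous_id.sub continuous_const).mul (differentiable_gaussian ξ).continuous
  refine (memLp_two_iff_integrable_sq hc.aestronglyMeasurable).2 ?_
  simpa [mul_pow, gaussian_sq, rpow_two] using
    (integrable_rpow_mul_exp_neg_mul_sq one_pos (by norm_num : (-1 : ℝ) < 2)).comp_sub_right ξ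

lemma memB1_gaussian : MemB1 (gaussian ξ) := by
  refine MemB1.of_memLp_two (differentiable_gaussian ξ) (memLp_two_gaussian ξ) ?_
    (memLp_two_sub_mul_gaussian ξ)
  simpa only [deriv_gaussian, neg_mul, Pi.neg_def] using (memLp_two_sub_mul_gaussian ξ).neg

lemma nR_gaussian : nR (gaussian ξ) = √π := by
  simp only [nR, gaussian_sq]
  rw [integral_sub_right_eq_self (fun x => exp (-x ^ 2)) ξ, integral_exp_neg_sq]

lemma integral_energy_gaussian :
    ∫ t, (deriv (gaussian ξ) t ^ 2 + (t - ξ) ^ 2 * gaussian ξ t ^ 2) = √π := by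
  rw [(memB1_gaussian ξ).integral_energy_eq ξ, ← nR, nR_gaussian]
  simp [deriv_gaussian, ← add_mul]

end Gaussian

section HalfLines

def energyOn (s : Set ℝ) (ξ : ℝ) (u : ℝ → ℝ) : ℝ :=
  ∫ t in s, (deriv u t ^ 2 + (t - ξ) ^ 2 * u t ^ 2)

def massOn (s : Set ℝ) (u : ℝ → ℝ) : ℝ := ∫ t in s, u t ^ 2

variable {u : ℝ → ℝ}

lemma energyOn_nonneg (s : Set ℝ) (ξ : ℝ) (u : ℝ → ℝ) : 0 ≤ energyOn s ξ u :=
  integral_nonneg fun _ => by positivity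

lemma massOn_nonneg (s : Set ℝ) (u : ℝ → ℝ) : 0 ≤ massOn s u :=
  integral_nonneg fun _ => sq_nonneg _

lemma integral_eq_Iio_add_Ioi {f : ℝ → ℝ} (hf : Integrable f) :
    ∫ t, f t = (∫ t in Iio 0, f t) + ∫ t in Ioi 0, f t := by
  rw [← intervalIntegral.integral_Iic_add_Ioi hf.integrableOn hf.integrableOn,
    setIntegral_congr_set Iio_ae_eq_Iic]

lemma nR_eq_massOn_add (hu : MemB1 u) : nR u = massOn (Iio 0) u + massOn (Ioi 0) u :=
  integral_eq_Iio_add_Ioi hu.2.1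

lemma MemB1.integral_energy_eq_energyOn_add (hu : MemB1 u) (ξ : ℝ) :
    ∫ t, (deriv u t ^ 2 + (t - ξ) ^ 2 * u t ^ 2) = energyOn (Iio 0) ξ u + energyOn (Ioi 0) ξ u :=
  integral_eq_Iio_add_Ioi (hu.integrable_energy ξ)

lemma MemB1.massOn_add_le_energyOn_add (hu : MemB1 u) (ξ : ℝ) :
    massOn (Iio 0) u + massOn (Ioi 0) u ≤ energyOn (Iio 0) ξ u + energyOn (Ioi 0) ξ u := by
  rw [← nR_eq_massOn_add hu, ← hu.integral_energy_eq_energyOn_add]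
  exact hu.integral_sq_le_integral_energy ξ

lemma QI_eq (hu : MemB1 u) (a m α ξ : ℝ) :
    QI a m α ξ u = energyOn (Ioi 0) ξ u - α * massOn (Ioi 0) u
      + (1 / m * energyOn (Iio 0) ξ u + a * α * massOn (Iio 0) u) := by
  have hE := (hu.integrable_energy ξ).integrableOn (s := Ioi 0)
  have hN := hu.2.1.integrableOn (s := Ioi 0)
  rw [QI, integral_sub hE (hN.const_mul α),
    integral_add ((hu.integrable_energy ξ).const_mul _).integrableOn
      (hu.2.1.const_mul _).integrableOn,
    integral_const_mul, integral_const_mul, integral_const_mul]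
  rfl

end HalfLines

section Theta0

lemma qRobin_zero (ξ : ℝ) (u : ℝ → ℝ) : qRobin 0 ξ u = energyOn (Ioi 0) ξ u := by
  rw [qRobin, zero_mul, add_zero]
  rfl

lemma qRobin_zero_div_np_nonneg (ξ : ℝ) (u : ℝ → ℝ) : 0 ≤ qRobin 0 ξ u / np u :=
  div_nonneg (qRobin_zero ξ u ▸ energyOn_nonneg _ ξ u) (massOn_nonneg _ u)

lemma lambda1N_nonneg (ξ : ℝ) : 0 ≤ lambda1N ξ :=
  Real.sInf_nonneg <| by
    rintro r ⟨u, -, -, rfl⟩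
    exact qRobin_zero_div_np_nonneg ξ u

lemma lambda1N_le {v : ℝ → ℝ} (hv : MemB1p v) (hv0 : np v ≠ 0) (ξ : ℝ) :
    lambda1N ξ ≤ qRobin 0 ξ v / np v := by
  refine csInf_le ⟨0, ?_⟩ ⟨v, hv, hv0, rfl⟩
  rintro r ⟨u, -, -, rfl⟩
  exact qRobin_zero_div_np_nonneg ξ u

lemma theta0_nonneg : 0 ≤ Theta0 :=
  Real.sInf_nonneg <| by
    rintro r ⟨ξ, rfl⟩
    exact lambda1N_nonneg ξ

lemma theta0_le_lambda1N (ξ : ℝ) : Theta0 ≤ lambda1N ξ :=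
  csInf_le ⟨0, by rintro r ⟨ξ', rfl⟩; exact lambda1N_nonneg ξ'⟩ ⟨ξ, rfl⟩

lemma theta0_mul_massOn_le_energyOn {v : ℝ → ℝ} (hv : MemB1p v) (ξ : ℝ) :
    Theta0 * massOn (Ioi 0) v ≤ energyOn (Ioi 0) ξ v := by
  rcases (massOn_nonneg (Ioi 0) v).eq_or_lt with hzero | hpos
  · rw [← hzero, mul_zero]
    exact energyOn_nonneg _ ξ v
  have hle := lambda1N_le hv hpos.ne' ξ
  rw [qRobin_zero, show np v = massOn (Ioi 0) v from rfl, le_div_iff₀ hpos] at hle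
  exact (mul_le_mul_of_nonneg_right (theta0_le_lambda1N ξ) hpos.le).trans hle

lemma MemB1.memB1p {u : ℝ → ℝ} (hu : MemB1 u) : MemB1p u :=
  ⟨hu.1, hu.2.1.integrableOn, hu.2.2.1.integrableOn, hu.2.2.2.integrableOn⟩

end Theta0

section GroundState

variable {a m α ξ : ℝ} {u : ℝ → ℝ}

lemma nR_pos (hu : nR u ≠ 0) : 0 < nR u :=
  (integral_nonneg fun _ => sq_nonneg _).lt_of_ne' hu

lemma one_div_sub_mul_nR_le_QI (hm : 1 ≤ m) (ha : 0 ≤ a) (hα : 0 ≤ α) (hu : MemB1 u) :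
    (1 / m - α) * nR u ≤ QI a m α ξ u := by
  have hosc := hu.massOn_add_le_energyOn_add ξ
  have hm₀ : 0 ≤ 1 / m := by positivity
  have hm₁ : 1 / m ≤ 1 := by rw [div_le_one₀ (by linarith)]; exact hm
  rw [QI_eq hu, nR_eq_massOn_add hu]
  nlinarith [mul_le_mul_of_nonneg_left hosc hm₀,
    mul_nonneg (sub_nonneg.2 hm₁) (energyOn_nonneg (Ioi 0) ξ u),
    mul_nonneg (mul_nonneg (by linarith : (0 : ℝ) ≤ 1 + a) hα) (massOn_nonneg (Iio 0) u)]

lemma le_mu1 {c : ℝ} (h : ∀ u, MemB1 u → nR u ≠ 0 → c * nR u ≤ QI a m α ξ u) :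
    c ≤ mu1 a m α ξ := by
  refine le_csInf ⟨_, gaussian 0, memB1_gaussian 0, by rw [nR_gaussian]; positivity, rfl⟩ ?_
  rintro r ⟨u, hu, hu0, rfl⟩
  exact (le_div_iff₀ (nR_pos hu0)).2 (h u hu hu0)

lemma mu1_le (hm : 1 ≤ m) (ha : 0 ≤ a) (hα : 0 ≤ α) (hu : MemB1 u) (hu0 : nR u ≠ 0) :
    mu1 a m α ξ ≤ QI a m α ξ u / nR u := by
  refine csInf_le ⟨1 / m - α, ?_⟩ ⟨u, hu, hu0, rfl⟩
  rintro r ⟨v, hv, hv0, rfl⟩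
  exact (le_div_iff₀ (nR_pos hv0)).2 (one_div_sub_mul_nR_le_QI hm ha hα hv)

lemma one_div_sub_le_mu1 (hm : 1 ≤ m) (ha : 0 ≤ a) (hα : 0 ≤ α) : 1 / m - α ≤ mu1 a m α ξ :=
  le_mu1 fun _ hu _ => one_div_sub_mul_nR_le_QI hm ha hα hu

lemma bddBelow_range_mu1 (hm : 1 ≤ m) (ha : 0 ≤ a) (hα : 0 ≤ α) :
    BddBelow (range (mu1 a m α)) :=
  ⟨1 / m - α, by rintro _ ⟨ξ, rfl⟩; exact one_div_sub_le_mu1 hm ha hα⟩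

lemma min_le_mu1 (hm : 0 ≤ m) : min (Theta0 - α) (a * α) ≤ mu1 a m α ξ := by
  refine le_mu1 fun u hu _ => ?_
  have hθ := theta0_mul_massOn_le_energyOn hu.memB1p ξ
  rw [QI_eq hu, nR_eq_massOn_add hu]
  nlinarith [mul_nonneg (one_div_nonneg.2 hm) (energyOn_nonneg (Iio 0) ξ u),
    mul_le_mul_of_nonneg_right (min_le_left (Theta0 - α) (a * α)) (massOn_nonneg (Ioi 0) u),
    mul_le_mul_of_nonneg_right (min_le_right (Theta0 - α) (a * α)) (massOn_nonneg (Iio 0) u)]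

lemma div_le_mu1 {ε : ℝ} (hε : 0 ≤ ε) (hm : m = 1 + ε) (ha : 0 ≤ a) (hθ : Theta0 ≤ α) :
    (1 - α + m * ε * (Theta0 - α)) / (1 + m * ε) ≤ mu1 a m α ξ := by
  have hm₀ : 0 < m := by linarith
  have hmε : 0 ≤ m * ε := by positivity
  have hcoef : 1 ≤ (1 + m * ε) * (1 / m) := by
    rw [mul_one_div, le_div_iff₀ hm₀, one_mul]
    nlinarith
  refine le_mu1 fun u hu _ => ?_
  rw [div_mul_eq_mul_div, div_le_iff₀ (by positivity), QI_eq hu, nR_eq_massOn_add hu]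
  have hosc := hu.massOn_add_le_energyOn_add ξ
  have hΘ := theta0_mul_massOn_le_energyOn hu.memB1p ξ
  have hα : 0 ≤ α := theta0_nonneg.trans hθ
  nlinarith [mul_le_mul_of_nonneg_right hcoef (energyOn_nonneg (Iio 0) ξ u),
    mul_le_mul_of_nonneg_left hΘ hmε, massOn_nonneg (Iio 0) u, massOn_nonneg (Ioi 0) u,
    mul_nonneg (mul_nonneg (add_nonneg zero_le_one hmε) (mul_nonneg ha hα))
      (massOn_nonneg (Iio 0) u),
    mul_nonneg (add_nonneg hα (mul_nonneg hmε (sub_nonneg.2 hθ))) (massOn_nonneg (Iio 0) u)]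

end GroundState

section UpperBound

open Real

variable {a m α ξ : ℝ}

lemma massOn_Iio_gaussian_le (hξ : 0 ≤ ξ) : massOn (Iio 0) (gaussian ξ) ≤ exp (-ξ ^ 2) * √π := by
  calc massOn (Iio 0) (gaussian ξ) ≤ ∫ t in Iio 0, exp (-ξ ^ 2) * exp (-t ^ 2) := by
        refine setIntegral_mono_on (memB1_gaussian ξ).2.1.integrableOn
          (integrable_exp_neg_sq.const_mul _).integrableOn measurableSet_Iio fun t ht => ?_
        rw [gaussian_sq, ← exp_add]
        exact exp_le_exp.2 (by nlinarith [mem_Iio.1 ht])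
    _ = exp (-ξ ^ 2) * ∫ t in Iio 0, exp (-t ^ 2) := integral_const_mul _ _
    _ ≤ exp (-ξ ^ 2) * √π := by
        gcongr
        exact (setIntegral_le_integral integrable_exp_neg_sq
          (ae_of_all _ fun t => (exp_pos (-t ^ 2)).le)).trans_eq integral_exp_neg_sq

lemma mu1_le_one_sub_add (hm : 1 ≤ m) (ha : 0 ≤ a) (hα : 0 ≤ α) (hξ : 0 ≤ ξ) :
    mu1 a m α ξ ≤ 1 - α + (1 + a) * α * exp (-ξ ^ 2) := by
  have hg := memB1_gaussian ξ
  have hN : nR (gaussian ξ) = √π := nR_gaussian ξ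
  have hπ : 0 < √π := by positivity
  refine (mu1_le hm ha hα hg (hN ▸ hπ.ne')).trans ?_
  rw [hN, div_le_iff₀ hπ, QI_eq hg]
  have hE := integral_energy_gaussian ξ
  rw [hg.integral_energy_eq_energyOn_add] at hE
  have hM := nR_eq_massOn_add hg
  rw [hN] at hM
  have hm₁ : 1 / m ≤ 1 := by rw [div_le_one₀ (by linarith)]; exact hm
  nlinarith [mul_nonneg (sub_nonneg.2 hm₁) (energyOn_nonneg (Iio 0) ξ (gaussian ξ)),
    mul_le_mul_of_nonneg_left (massOn_Iio_gaussian_le hξ)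
      (mul_nonneg (by linarith : (0 : ℝ) ≤ 1 + a) hα)]

lemma iInf_mu1_le_one_sub (hm : 1 ≤ m) (ha : 0 ≤ a) (hα : 0 ≤ α) :
    ⨅ ξ, mu1 a m α ξ ≤ 1 - α := by
  have hlim : Tendsto (fun ξ : ℝ => 1 - α + (1 + a) * α * exp (-ξ ^ 2)) atTop (𝓝 (1 - α)) := by
    simpa using ((tendsto_exp_neg_atTop_nhds_zero.comp (tendsto_pow_atTop two_ne_zero)).const_mul
      ((1 + a) * α)).const_add (1 - α)
  refine ge_of_tendsto hlim ((eventually_ge_atTop 0).mono fun ξ hξ => ?_)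
  exact (ciInf_le (bddBelow_range_mu1 hm ha hα) ξ).trans (mu1_le_one_sub_add hm ha hα hξ)

end UpperBound

section Continuity

variable {a m α β ξ : ℝ}

lemma QI_le_QI_add (ha : 0 ≤ a) {u : ℝ → ℝ} (hu : MemB1 u) :
    QI a m α ξ u ≤ QI a m β ξ u + (1 + a) * |α - β| * nR u := by
  rw [QI_eq hu, QI_eq hu, nR_eq_massOn_add hu]
  have hNm := massOn_nonneg (Iio 0) u
  have hNp := massOn_nonneg (Ioi 0) u
  nlinarith [mul_le_mul_of_nonneg_right (neg_abs_le (α - β)) hNp,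
    mul_le_mul_of_nonneg_right (le_abs_self (α - β)) (mul_nonneg ha hNm),
    mul_nonneg (mul_nonneg ha (abs_nonneg (α - β))) hNp, mul_nonneg (abs_nonneg (α - β)) hNm]

lemma mu1_le_mu1_add (hm : 1 ≤ m) (ha : 0 ≤ a) (hα : 0 ≤ α) :
    mu1 a m α ξ ≤ mu1 a m β ξ + (1 + a) * |α - β| := by
  suffices mu1 a m α ξ - (1 + a) * |α - β| ≤ mu1 a m β ξ by linarith
  refine le_mu1 fun u hu hu0 => ?_
  have h := (le_div_iff₀ (nR_pos hu0)).1 (mu1_le (ξ := ξ) hm ha hα hu hu0)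
  linarith [QI_le_QI_add (m := m) (α := α) (β := β) (ξ := ξ) ha hu]

lemma iInf_mu1_le_add (hm : 1 ≤ m) (ha : 0 ≤ a) (hα : 0 ≤ α) :
    ⨅ ξ, mu1 a m α ξ ≤ (⨅ ξ, mu1 a m β ξ) + (1 + a) * |α - β| := by
  suffices (⨅ ξ, mu1 a m α ξ) - (1 + a) * |α - β| ≤ ⨅ ξ, mu1 a m β ξ by linarith
  exact le_ciInf fun ξ => by
    linarith [ciInf_le (bddBelow_range_mu1 hm ha hα) ξ, mu1_le_mu1_add (β := β) (ξ := ξ) hm ha hα]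

lemma continuousOn_iInf_mu1 (hm : 1 ≤ m) (ha : 0 ≤ a) :
    ContinuousOn (fun α => ⨅ ξ, mu1 a m α ξ) (Ici 0) :=
  (LipschitzOnWith.of_le_add_mul' (1 + a) fun _ hα _ _ => by
    rw [Real.dist_eq]
    exact iInf_mu1_le_add hm ha hα).continuousOn

end Continuity

section Critical

variable {a m α : ℝ}

lemma exists_iInf_mu1_eq_zero (hm : 1 ≤ m) (ha : 0 ≤ a) :
    ∃ α ∈ Ioc (0 : ℝ) 1, ⨅ ξ, mu1 a m α ξ = 0 := by
  have h₀ : 0 < ⨅ ξ, mu1 a m 0 ξ := by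
    refine lt_of_lt_of_le (by positivity : (0 : ℝ) < 1 / m) (le_ciInf fun ξ => ?_)
    simpa using one_div_sub_le_mu1 (α := 0) (ξ := ξ) hm ha le_rfl
  have h₁ : ⨅ ξ, mu1 a m 1 ξ ≤ 0 := by simpa using iInf_mu1_le_one_sub hm ha zero_le_one
  obtain ⟨α, hα, hzero⟩ := intermediate_value_Icc' zero_le_one
    ((continuousOn_iInf_mu1 hm ha).mono Icc_subset_Ici_self) ⟨h₁, h₀.le⟩
  refine ⟨α, ⟨hα.1.lt_of_ne ?_, hα.2⟩, hzero⟩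
  rintro rfl
  exact h₀.ne' hzero

lemma le_one_of_iInf_mu1_eq_zero (hm : 1 ≤ m) (ha : 0 ≤ a) (hα : 0 ≤ α)
    (hcrit : ⨅ ξ, mu1 a m α ξ = 0) : α ≤ 1 := by
  linarith [iInf_mu1_le_one_sub hm ha hα]

lemma theta0_le_of_iInf_mu1_eq_zero (hm : 0 ≤ m) (ha : 0 < a) (hα : 0 < α)
    (hcrit : ⨅ ξ, mu1 a m α ξ = 0) : Theta0 ≤ α := by
  have h : min (Theta0 - α) (a * α) ≤ 0 := hcrit ▸ le_ciInf fun ξ => min_le_mu1 hm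
  rcases min_le_iff.1 h with h | h
  · linarith
  · linarith [mul_pos ha hα]

lemma bounds_of_iInf_mu1_eq_zero {ε : ℝ} (ha : 0 < a) (hε : ε ∈ Ioo (0 : ℝ) 1) (hm : m = 1 + ε)
    (hα : 0 < α) (hcrit : ⨅ ξ, mu1 a m α ξ = 0) :
    0 ≥ 1 - α + m * ε * (Theta0 - α) ∧
      1 - α ≤ m * ε * (α - Theta0) ∧ m * ε * (α - Theta0) ≤ 2 * ε := by
  obtain ⟨hε₀, hε₁⟩ := hε
  have hm₁ : 1 ≤ m := by linarith
  have hθ := theta0_le_of_iInf_mu1_eq_zero (by linarith) ha hα hcrit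
  have hquot : (1 - α + m * ε * (Theta0 - α)) / (1 + m * ε) ≤ 0 :=
    hcrit ▸ le_ciInf fun ξ => div_le_mu1 hε₀.le hm ha.le hθ
  have hneg : 1 - α + m * ε * (Theta0 - α) ≤ 0 := by
    rwa [div_le_iff₀ (by positivity), zero_mul] at hquot
  have hα₁ := le_one_of_iInf_mu1_eq_zero hm₁ ha.le hα.le hcrit
  refine ⟨hneg, by linarith, ?_⟩
  nlinarith [mul_nonneg hε₀.le theta0_nonneg, mul_nonneg hε₀.le (sub_nonneg.2 hα₁)]

lemma alphaF_mem_Icc (ha : 0 < a) (hm : m ∈ Ioo (1 : ℝ) 2) :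
    alphaF a m ∈ Icc (1 - 2 * (m - 1)) 1 := by
  obtain ⟨α₀, hα₀, hcrit₀⟩ := exists_iInf_mu1_eq_zero hm.1.le ha.le
  rw [alphaF, mem_Icc]
  constructor
  · refine le_csInf ⟨α₀, hα₀.1, hcrit₀⟩ fun α hα => ?_
    have := bounds_of_iInf_mu1_eq_zero ha ⟨sub_pos.2 hm.1, by linarith [hm.2]⟩ (by ring) hα.1 hα.2
    linarith [this.2.1, this.2.2]
  · have hbdd : BddBelow {α : ℝ | 0 < α ∧ sInf (range (mu1 a m α)) = 0} :=
      ⟨0, fun _ hα => hα.1.le⟩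
    exact (csInf_le hbdd ⟨hα₀.1, hcrit₀⟩).trans hα₀.2

end Critical

/-- `α(a,m) → 1` as `m → 1⁺`; quantitatively, if `m = 1 + ε` with
`ε ∈ (0,1)` and `α = α(a,m)`, then `0 ≥ 1 - α + mε(Θ₀ - α)`, hence
`1 - α ≤ mε(α - Θ₀) ≤ 2ε`. -/
theorem alpha_limit_m_to_one (a : ℝ) (ha : 0 < a) :
    Tendsto (fun m => alphaF a m) (𝓝[>] (1:ℝ)) (𝓝 1) ∧
    ∀ ε m α : ℝ, ε ∈ Ioo (0:ℝ) 1 → m = 1 + ε → 0 < α →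
      sInf (Set.range (mu1 a m α)) = 0 →
      0 ≥ 1 - α + m * ε * (Theta0 - α) ∧
      1 - α ≤ m * ε * (α - Theta0) ∧ m * ε * (α - Theta0) ≤ 2 * ε := by
  refine ⟨?_, fun ε m α hε hm hα hcrit => bounds_of_iInf_mu1_eq_zero ha hε hm hα hcrit⟩
  have hlower : Tendsto (fun m : ℝ => 1 - 2 * (m - 1)) (𝓝[>] 1) (𝓝 1) := by
    have : Continuous fun m : ℝ => 1 - 2 * (m - 1) := by fun_prop
    simpa using (this.tendsto 1).mono_left nhdsWithin_le_nhds
  have hmem : ∀ᶠ m in 𝓝[>] (1 : ℝ), alphaF a m ∈ Icc (1 - 2 * (m - 1)) 1 :=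
    eventually_of_mem (Ioo_mem_nhdsGT one_lt_two) fun m hm => alphaF_mem_Icc ha hm
  exact tendsto_of_tendsto_of_tendsto_of_le_of_le' hlower tendsto_const_nhds
    (hmem.mono fun _ h => h.1) (hmem.mono fun _ h => h.2)
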